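/- arXiv:math/0004073 — 7 statements merged into one kernel-verified Lean document; each statement's English description precedes it below -/
import Mathlib

section
/- Let m be a 2×2 complex matrix with m* = m (Hermitian), so that det m and tr m are real. Then there exists s ∈ ℂ² with m_{ij} = s_i · conj(s_j) for all i, j (i.e. m = s s*) if and only if det m = 0 and tr m ≥ 0. In other words, the image of the spinor squaring map σ(s) = s s* is exactly the forward light cone in ℝ^{3,1}. -/
open Matrix

/-! A Hermitian matrix whose 2×2 minors all vanish and whose diagonal is nonnegative has the form
`s s*`: if some `m k k > 0`, take `s i = m i k / √(m k k)`; otherwise every `|m i j|² = m i i m j j`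
vanishes and `m = 0`. For a 2×2 matrix the only nontrivial minor is `det m`, and
`m 0 0 * m 1 1 = |m 0 1|² ≥ 0` together with `tr m ≥ 0` makes the diagonal nonnegative. -/

namespace Matrix

variable {n 𝕜 : Type*} [RCLike 𝕜]

theorem exists_eq_vecMulVec_star_of_re_apply_self_pos {m : Matrix n n 𝕜} (hm : m.IsHermitian)
    {k : n} (hk : 0 < RCLike.re (m k k)) (hminor : ∀ i j, m i j * m k k = m i k * m k j) :
    ∃ s : n → 𝕜, m = vecMulVec s (star s) := by
  refine ⟨fun i => m i k / (√(RCLike.re (m k k)) : 𝕜), ?_⟩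
  have hkk : ((√(RCLike.re (m k k)) : ℝ) : 𝕜) * (√(RCLike.re (m k k)) : 𝕜) = m k k := by
    rw [← RCLike.ofReal_mul, Real.mul_self_sqrt hk.le, hm.coe_re_apply_self]
  have hkk0 : m k k ≠ 0 := fun h => by simp [h] at hk
  ext i j
  rw [vecMulVec_apply, Pi.star_apply, star_div₀, hm.apply k j, RCLike.star_def,
    RCLike.conj_ofReal, div_mul_div_comm, hkk, eq_div_iff hkk0, hminor]

theorem exists_eq_vecMulVec_star {m : Matrix n n 𝕜} (hm : m.IsHermitian)
    (hdiag : ∀ i, 0 ≤ RCLike.re (m i i)) (hminor : ∀ i j k, m i j * m k k = m i k * m k j) :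
    ∃ s : n → 𝕜, m = vecMulVec s (star s) := by
  by_cases hpos : ∃ k, 0 < RCLike.re (m k k)
  · obtain ⟨k, hk⟩ := hpos
    exact exists_eq_vecMulVec_star_of_re_apply_self_pos hm hk (fun i j => hminor i j k)
  · refine ⟨0, ?_⟩
    have hzero : ∀ i, m i i = 0 := fun i => by
      rw [← hm.coe_re_apply_self, le_antisymm (not_lt.mp (not_exists.mp hpos i)) (hdiag i),
        RCLike.ofReal_zero]
    ext i j
    have h := hminor j j i
    rw [hzero, hzero, zero_mul, ← hm.apply j i, RCLike.star_def, RCLike.conj_mul] at h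
    simpa using h.symm

theorem re_trace_vecMulVec_star_nonneg [Fintype n] (s : n → 𝕜) :
    0 ≤ RCLike.re (vecMulVec s (star s)).trace := by
  simp only [trace, diag_apply, vecMulVec_apply, Pi.star_apply, RCLike.star_def, RCLike.mul_conj,
    map_sum, RCLike.re_ofReal_pow]
  positivity

theorem mul_apply_self_eq_of_det_eq_zero {R : Type*} [CommRing R] {m : Matrix (Fin 2) (Fin 2) R}
    (hdet : m.det = 0) (i j k : Fin 2) : m i j * m k k = m i k * m k j := by
  rw [det_fin_two] at hdet
  fin_cases i <;> fin_cases j <;> fin_cases k <;>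
    simp only [Fin.zero_eta, Fin.mk_one, Fin.isValue] <;>
    first | ring | linear_combination hdet

theorem IsHermitian.re_apply_self_nonneg_of_det_eq_zero {m : Matrix (Fin 2) (Fin 2) 𝕜}
    (hm : m.IsHermitian) (hdet : m.det = 0) (htr : 0 ≤ RCLike.re m.trace) (i : Fin 2) :
    0 ≤ RCLike.re (m i i) := by
  have hprod : RCLike.re (m 0 0) * RCLike.re (m 1 1) = ‖m 0 1‖ ^ 2 := by
    rw [det_fin_two, ← hm.coe_re_apply_self 0, ← hm.coe_re_apply_self 1, ← hm.apply 1 0,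
      RCLike.star_def, RCLike.mul_conj, ← RCLike.ofReal_mul, ← RCLike.ofReal_pow,
      ← RCLike.ofReal_sub, RCLike.ofReal_eq_zero, sub_eq_zero] at hdet
    exact hdet
  rw [trace_fin_two, map_add] at htr
  have := sq_nonneg ‖m 0 1‖
  fin_cases i <;> simp only [Fin.zero_eta, Fin.mk_one, Fin.isValue] <;> nlinarith

end Matrix

/-- A Hermitian 2×2 complex matrix `m` is of the form `s s*` for some `s ∈ ℂ²` if and only if
`det m = 0` and `tr m ≥ 0`: the image of the spinor squaring map `σ(s) = s s*` is exactly
the forward light cone in `ℝ^{3,1}` (the Hermitian 2×2 matrices with `-det` as quadratic form). -/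
theorem spinor_squaring_image_R31 (m : Matrix (Fin 2) (Fin 2) ℂ) (hm : mᴴ = m) :
    (∃ s : Fin 2 → ℂ, ∀ i j, m i j = s i * star (s j)) ↔ (m.det = 0 ∧ 0 ≤ m.trace.re) := by
  have hsquare (s : Fin 2 → ℂ) :
      (∀ i j, m i j = s i * star (s j)) ↔ m = vecMulVec s (star s) := by
    rw [← Matrix.ext_iff]; rfl
  simp_rw [hsquare]
  constructor
  · rintro ⟨s, rfl⟩
    exact ⟨det_vecMulVec _ _, re_trace_vecMulVec_star_nonneg s⟩
  · rintro ⟨hdet, htr⟩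
    replace hm : m.IsHermitian := hm
    exact exists_eq_vecMulVec_star hm (hm.re_apply_self_nonneg_of_det_eq_zero hdet htr)
      (mul_apply_self_eq_of_det_eq_zero hdet)
end

section
/- Let A be a 2×2 quaternionic matrix. Then A satisfies A*QA = Q and A·(1,1)ᵀ = (1,1)ᵀ if and only if there exists q ∈ ℍ with Re q = 0 such that A = [[1+q, −q],[−star q, 1+star q]]. That is, the stabilizer in Sp(1,1) of the null spinor s₀ = (1,1)ᵀ is exactly the set G₀ = {[[1+q, −q],[−star q, 1+star q]] : q ∈ Im ℍ}. -/
open Matrix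

/-- The matrix `Q = diag(1, -1)` defining the quaternionic Hermitian form of signature (1,1). -/
noncomputable def Qm : Matrix (Fin 2) (Fin 2) (Quaternion ℝ) := !![1, 0; 0, -1]

/-!
An isometry `A` of the form `⟨x, y⟩ = x* Q y` fixing a vector `s` also fixes the covector
`s* Q = ⟨s, ·⟩`. For `s₀ = (1,1)ᵀ` this covector is `(1,-1)`, and the two linear conditions
`A s₀ = s₀`, `(1,-1) A = (1,-1)` already force `A = [[1+q, -q], [q, 1-q]]` with `q = A₁₀`.
For such `A` one computes `A* Q A = Q + (q + q̄) [[1,-1],[-1,1]]`, so `A` is an isometry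
exactly when `q̄ = -q`, i.e. `Re q = 0`.
-/

theorem Matrix.star_vecMul_vecMul_eq_of_conjTranspose_mul_mul_eq {R n : Type*} [Fintype n]
    [Semiring R] [StarRing R] {A Q : Matrix n n R} {v : n → R}
    (hA : Aᴴ * Q * A = Q) (hv : A *ᵥ v = v) : star v ᵥ* Q ᵥ* A = star v ᵥ* Q := by
  calc star v ᵥ* Q ᵥ* A = star (A *ᵥ v) ᵥ* Q ᵥ* A := by rw [hv]
    _ = star v ᵥ* (Aᴴ * Q * A) := by
      rw [star_mulVec, vecMul_vecMul, vecMul_vecMul, Matrix.mul_assoc]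
    _ = star v ᵥ* Q := by rw [hA]

section NullStabilizer

variable {R : Type*} [Ring R]

def nullStab (q : R) : Matrix (Fin 2) (Fin 2) R := !![1 + q, -q; q, 1 - q]

theorem nullStab_mulVec_one_one (q : R) : nullStab q *ᵥ ![1, 1] = ![1, 1] := by
  ext i; fin_cases i <;> simp [nullStab, mulVec, dotProduct, Fin.sum_univ_two]

theorem eq_nullStab_of_mulVec_of_vecMul {A : Matrix (Fin 2) (Fin 2) R}
    (hv : A *ᵥ ![1, 1] = ![1, 1]) (hw : ![1, -1] ᵥ* A = ![1, -1]) : A = nullStab (A 1 0) := by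
  have hrow0 : A 0 0 + A 0 1 = 1 := by simpa [mulVec, dotProduct] using congrFun hv 0
  have hrow1 : A 1 0 + A 1 1 = 1 := by simpa [mulVec, dotProduct] using congrFun hv 1
  have hcol0 : A 0 0 - A 1 0 = 1 := by
    simpa [vecMul, dotProduct, sub_eq_add_neg] using congrFun hw 0
  have hcol1 : A 0 1 - A 1 1 = -1 := by
    simpa [vecMul, dotProduct, sub_eq_add_neg] using congrFun hw 1
  ext i j; fin_cases i <;> fin_cases j <;> simp [nullStab] <;> grind

theorem conjTranspose_nullStab_mul_mul_nullStab_iff [StarRing R] (q : R) :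
    (nullStab q)ᴴ * !![1, 0; 0, -1] * nullStab q = !![1, 0; 0, -1] ↔ q + star q = 0 := by
  have hprod : (nullStab q)ᴴ * !![1, 0; 0, -1] * nullStab q =
      !![1, 0; 0, -1] + (q + star q) • !![1, -1; -1, 1] := by
    ext i j; fin_cases i <;> fin_cases j <;>
      simp [nullStab, Matrix.mul_apply, Fin.sum_univ_two] <;> noncomm_ring
  rw [hprod, add_eq_left]
  exact ⟨fun h ↦ by simpa using congrFun (congrFun h 0) 0, fun h ↦ by rw [h, zero_smul]⟩

end NullStabilizer

/-- The stabilizer in `Sp(1,1)` of the null spinor `s₀ = (1,1)ᵀ ∈ ℍ²` is exactly the set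
`G₀ = {[[1+q, -q],[-q̄, 1+q̄]] : q ∈ Im ℍ}`. -/
theorem sp11_stabilizer_null_spinor (A : Matrix (Fin 2) (Fin 2) (Quaternion ℝ)) :
    (Aᴴ * Qm * A = Qm ∧ A.mulVec ![1, 1] = ![1, 1]) ↔
      ∃ q : Quaternion ℝ, q.re = 0 ∧ A = !![1 + q, -q; -star q, 1 + star q] := by
  constructor
  · rintro ⟨hQ, hv⟩
    have hcov : ![1, -1] ᵥ* A = ![1, -1] := by
      simpa [Qm, vecMul, dotProduct, Fin.sum_univ_two, vecHead, vecTail] using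
        star_vecMul_vecMul_eq_of_conjTranspose_mul_mul_eq hQ hv
    obtain ⟨q, rfl⟩ : ∃ q, A = nullStab q := ⟨_, eq_nullStab_of_mulVec_of_vecMul hv hcov⟩
    rw [Qm, conjTranspose_nullStab_mul_mul_nullStab_iff] at hQ
    have hstar : star q = -q := eq_neg_of_add_eq_zero_right hQ
    exact ⟨q, Quaternion.star_eq_neg.mp hstar, by rw [hstar, neg_neg, nullStab, sub_eq_add_neg]⟩
  · rintro ⟨q, hq, rfl⟩
    have hstar : star q = -q := Quaternion.star_eq_neg.mpr hq
    rw [hstar, neg_neg, ← sub_eq_add_neg]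
    exact ⟨(conjTranspose_nullStab_mul_mul_nullStab_iff q).mpr (by rw [hstar, add_neg_cancel]),
      nullStab_mulVec_one_one q⟩
end

section
/- For q ∈ ℍ with Re q = 0, define the 2×2 quaternionic matrix A(q) = [[1+q, −q],[−star q, 1+star q]]. Then for all q, q' ∈ ℍ with Re q = Re q' = 0 one has A(q)·A(q') = A(q+q'). Hence q ↦ A(q) is an injective group homomorphism from the additive group (Im ℍ, +) ≅ ℝ³ into the group of 2×2 quaternionic matrices, so the stabilizer G₀ of the null spinor (1,1)ᵀ is isomorphic to ℝ³. -/
open Matrix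

/-- For `q ∈ Im ℍ`, the element `A(q) = [[1+q, -q],[-q̄, 1+q̄]]` of the stabilizer `G₀` of the
null spinor `(1,1)ᵀ`. -/
noncomputable def Amat (q : Quaternion ℝ) : Matrix (Fin 2) (Fin 2) (Quaternion ℝ) :=
  !![1 + q, -q; -star q, 1 + star q]

/-- `A(q) A(q') = A(q + q')` for purely imaginary quaternions `q, q'`, and `q ↦ A(q)` is
injective there: hence `q ↦ A(q)` is an injective group homomorphism from `(Im ℍ, +) ≅ ℝ³`
into the 2×2 quaternionic matrices, so the stabilizer `G₀` of the null spinor `(1,1)ᵀ` is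
isomorphic to `ℝ³`. -/
theorem Amat_add_and_injective :
    (∀ q q' : Quaternion ℝ, q.re = 0 → q'.re = 0 → Amat q * Amat q' = Amat (q + q')) ∧
    (∀ q q' : Quaternion ℝ, q.re = 0 → q'.re = 0 → Amat q = Amat q' → q = q') := by
  constructor
  · intro q q' h h'
    have hs : star q = -q := by ext <;> simp [h]
    have hs' : star q' = -q' := by ext <;> simp [h']
    simp only [Amat, Matrix.mul_fin_two, hs, hs', star_add]
    congr 1; noncomm_ring
  · intro q q' h h' heq
    have := congrFun (congrFun heq 0) 0
    simpa [Amat, add_right_inj] using this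
end

section
/- Let r be a nonzero real number and let s = (r, 0)ᵀ ∈ ℍ². A 2×2 quaternionic matrix A satisfies A*QA = Q and A·s = s if and only if A = [[1, 0],[0, q]] for some q ∈ ℍ with ‖q‖ = 1. That is, the stabilizer in Sp(1,1) of the non-null spinor (r,0)ᵀ is exactly {diag(1, q) : q ∈ ℍ, ‖q‖ = 1} ≅ Sp(1). -/
open Matrix

/-- For `r ≠ 0` real, the stabilizer in `Sp(1,1)` of the non-null spinor `(r,0)ᵀ ∈ ℍ²` is
exactly `{diag(1, q) : q ∈ ℍ, ‖q‖ = 1} ≅ Sp(1)`. -/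
theorem sp11_stabilizer_nonnull_spinor (r : ℝ) (hr : r ≠ 0)
    (A : Matrix (Fin 2) (Fin 2) (Quaternion ℝ)) :
    (Aᴴ * Qm * A = Qm ∧ A.mulVec ![(r : Quaternion ℝ), 0] = ![(r : Quaternion ℝ), 0]) ↔
      ∃ q : Quaternion ℝ, ‖q‖ = 1 ∧ A = !![1, 0; 0, q] := by
  have hrq : (r : Quaternion ℝ) ≠ 0 := by
    intro h
    exact hr (Quaternion.coe_injective (h.trans Quaternion.coe_zero.symm))
  constructor
  · rintro ⟨hQ, hs⟩
    have h0 := congrFun hs 0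
    have h1 := congrFun hs 1
    simp [Matrix.mulVec, dotProduct, Fin.sum_univ_two] at h0 h1
    have hA00 : A 0 0 = 1 := mul_right_cancel₀ hrq (by rw [h0, one_mul])
    have hA10 : A 1 0 = 0 := h1.resolve_right hrq
    have e01 := congrFun (congrFun hQ 0) 1
    have e11 := congrFun (congrFun hQ 1) 1
    simp [Qm, Matrix.mul_apply, Fin.sum_univ_two, Matrix.conjTranspose_apply,
      hA00, hA10] at e01 e11
    have hA01 : A 0 1 = 0 := e01
    rw [hA01] at e11
    have hstar : star (A 1 1) * A 1 1 = 1 := by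
      have : -(star (A 1 1) * A 1 1) = -1 := by simpa using e11
      exact neg_injective this
    refine ⟨A 1 1, ?_, ?_⟩
    · have hn : ‖A 1 1‖ * ‖A 1 1‖ = 1 := by
        have := congrArg norm hstar
        simpa [norm_mul, norm_star] using this
      nlinarith [norm_nonneg (A 1 1)]
    · refine Matrix.ext fun i j => ?_
      fin_cases i <;> fin_cases j <;>
        simp [hA00, hA01, hA10]
  · rintro ⟨q, hq, rfl⟩
    have hstar : star q * q = 1 := by
      have : Quaternion.normSq q = 1 := by
        rw [Quaternion.normSq_eq_norm_mul_self, hq]; norm_num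
      rw [Quaternion.star_mul_self, this]
      simp
    constructor
    · refine Matrix.ext fun i j => ?_
      fin_cases i <;> fin_cases j <;>
        simp [Qm, Matrix.mul_apply, Fin.sum_univ_two, Matrix.conjTranspose_apply, hstar]
    · funext i
      fin_cases i <;>
        simp [Matrix.mulVec, dotProduct, Fin.sum_univ_two]
end

section
/- Define the spinor squaring map σ : ℍ² → 2×2 quaternionic matrices by σ(s) = s s* − ½ ν(s) Q, where (s s*)_{ij} = s_i · star(s_j) and ν(s) = ‖s₁‖² − ‖s₂‖². Then a 2×2 quaternionic matrix m lies in the image of σ if and only if m* = m, the two diagonal entries of m are equal to a common real number a ≥ 0, and ‖m₁₂‖ ≤ a. Consequently the image of σ is exactly the forward half of the cone {m : m* = m, tr(Qm) = 0, det(m) ≥ 0}, where for a quaternion-Hermitian matrix [[a, b],[star b, c]] (a, c real) one sets det = ac − b·star(b). -/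
open Matrix

/-- The spinor norm `ν(s) = ‖s₁‖² - ‖s₂‖²` on `ℍ² ≅ 𝕊^{4,1}`. -/
noncomputable def nu (s : Fin 2 → Quaternion ℝ) : ℝ := ‖s 0‖ ^ 2 - ‖s 1‖ ^ 2

/-- The spinor squaring map `σ(s) = s s* - ½ ν(s) Q` from `𝕊^{4,1} ≅ ℍ²` to `ℝ^{4,1}`,
the quaternion-Hermitian 2×2 matrices `m` with `tr(Qm) = 0`. -/
noncomputable def sigma41 (s : Fin 2 → Quaternion ℝ) : Matrix (Fin 2) (Fin 2) (Quaternion ℝ) :=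
  (Matrix.of fun i j => s i * star (s j)) - (nu s / 2) • Qm

lemma mat2_ext {A B : Matrix (Fin 2) (Fin 2) (Quaternion ℝ)} (e00 : A 0 0 = B 0 0)
    (e01 : A 0 1 = B 0 1) (e10 : A 1 0 = B 1 0) (e11 : A 1 1 = B 1 1) : A = B := by
  refine Matrix.ext fun i j => ?_
  fin_cases i <;> fin_cases j <;> assumption

lemma quat_self_mul_star (q : Quaternion ℝ) :
    q * star q = ((‖q‖ ^ 2 : ℝ) : Quaternion ℝ) := by
  rw [Quaternion.self_mul_star, Quaternion.normSq_eq_norm_mul_self, sq]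

lemma sigma41_apply (s : Fin 2 → Quaternion ℝ) (i j : Fin 2) :
    sigma41 s i j = s i * star (s j) - ((nu s / 2 : ℝ) : Quaternion ℝ) * Qm i j := by
  rw [sigma41]
  simp only [Matrix.sub_apply, Matrix.smul_apply, Matrix.of_apply, Quaternion.coe_mul_eq_smul]

lemma sig00 (s : Fin 2 → Quaternion ℝ) :
    sigma41 s 0 0 = (((‖s 0‖ ^ 2 + ‖s 1‖ ^ 2) / 2 : ℝ) : Quaternion ℝ) := by
  rw [sigma41_apply, quat_self_mul_star]
  have h : Qm 0 0 = 1 := by simp [Qm]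
  rw [h, mul_one, ← Quaternion.coe_sub]
  norm_cast
  simp only [nu]; ring_nf

lemma sig11 (s : Fin 2 → Quaternion ℝ) :
    sigma41 s 1 1 = (((‖s 0‖ ^ 2 + ‖s 1‖ ^ 2) / 2 : ℝ) : Quaternion ℝ) := by
  rw [sigma41_apply, quat_self_mul_star]
  have h : Qm 1 1 = -1 := by simp [Qm]
  rw [h, mul_neg_one, sub_neg_eq_add, ← Quaternion.coe_add]
  norm_cast
  simp only [nu]; ring_nf

lemma sig01 (s : Fin 2 → Quaternion ℝ) : sigma41 s 0 1 = s 0 * star (s 1) := by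
  rw [sigma41_apply]
  have h : Qm 0 1 = 0 := by simp [Qm]
  rw [h, mul_zero, sub_zero]

lemma sig10 (s : Fin 2 → Quaternion ℝ) : sigma41 s 1 0 = s 1 * star (s 0) := by
  rw [sigma41_apply]
  have h : Qm 1 0 = 0 := by simp [Qm]
  rw [h, mul_zero, sub_zero]

/-- A 2×2 quaternionic matrix `m` lies in the image of the spinor squaring map
`σ(s) = s s* - ½ ν(s) Q` if and only if `m` is quaternion-Hermitian, its two diagonal entries
equal a common real number `a ≥ 0`, and `‖m₁₂‖ ≤ a`.  Consequently the image of `σ` is exactly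
the forward half of the cone `{m : m* = m, tr(Qm) = 0, det m ≥ 0}`. -/
theorem spinor_squaring_image_R41 (m : Matrix (Fin 2) (Fin 2) (Quaternion ℝ)) :
    (∃ s : Fin 2 → Quaternion ℝ, sigma41 s = m) ↔
      (mᴴ = m ∧ ∃ a : ℝ, 0 ≤ a ∧ m 0 0 = (a : Quaternion ℝ) ∧ m 1 1 = (a : Quaternion ℝ) ∧
        ‖m 0 1‖ ≤ a) := by
  constructor
  · rintro ⟨s, rfl⟩
    refine ⟨?_, (‖s 0‖ ^ 2 + ‖s 1‖ ^ 2) / 2, by positivity, sig00 s, sig11 s, ?_⟩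
    · refine mat2_ext ?_ ?_ ?_ ?_ <;> rw [Matrix.conjTranspose_apply]
      · rw [sig00, Quaternion.star_coe]
      · rw [sig10, sig01, StarMul.star_mul, star_star]
      · rw [sig01, sig10, StarMul.star_mul, star_star]
      · rw [sig11, Quaternion.star_coe]
    · rw [sig01, norm_mul, norm_star]
      nlinarith [sq_nonneg (‖s 0‖ - ‖s 1‖), norm_nonneg (s 0), norm_nonneg (s 1)]
  · rintro ⟨hm, a, ha, h00, h11, h01⟩
    have hb10 : m 1 0 = star (m 0 1) := by
      conv_lhs => rw [← hm]
      rw [Matrix.conjTranspose_apply]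
    rcases eq_or_lt_of_le ha with ha0 | ha0
    · -- a = 0
      have hb : m 0 1 = 0 := by
        have h : ‖m 0 1‖ = 0 := le_antisymm (h01.trans ha0.symm.le) (norm_nonneg _)
        simpa using h
      refine ⟨fun _ => 0, mat2_ext ?_ ?_ ?_ ?_⟩
      · rw [sig00, h00, ← ha0]; norm_num
      · rw [sig01, hb]; simp
      · rw [sig10, hb10, hb]; simp
      · rw [sig11, h11, ← ha0]; norm_num
    · -- 0 < a
      set c : ℝ := ‖m 0 1‖ with hc
      have hc0 : 0 ≤ c := norm_nonneg _
      have hd0 : 0 ≤ Real.sqrt (a ^ 2 - c ^ 2) := Real.sqrt_nonneg _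
      set d : ℝ := Real.sqrt (a ^ 2 - c ^ 2) with hddef
      have hd2 : d ^ 2 = a ^ 2 - c ^ 2 := Real.sq_sqrt (by nlinarith)
      have hr2 : Real.sqrt (a + d) ^ 2 = a + d := Real.sq_sqrt (by linarith)
      have hr0 : 0 < Real.sqrt (a + d) := Real.sqrt_pos.mpr (by linarith)
      set r : ℝ := Real.sqrt (a + d) with hrdef
      have hrne : r ≠ 0 := ne_of_gt hr0
      have hkey : r ^ 2 * r ^ 2 + c ^ 2 = 2 * a * (r ^ 2) := by nlinarith
      set s : Fin 2 → Quaternion ℝ :=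
        ![(r : Quaternion ℝ), ((r⁻¹ : ℝ) : Quaternion ℝ) * star (m 0 1)] with hs
      have hs0 : s 0 = (r : Quaternion ℝ) := rfl
      have hs1 : s 1 = ((r⁻¹ : ℝ) : Quaternion ℝ) * star (m 0 1) := rfl
      have hn0 : ‖s 0‖ = r := by
        rw [hs0, Quaternion.norm_coe, Real.norm_eq_abs, abs_of_pos hr0]
      have hn1 : ‖s 1‖ = r⁻¹ * c := by
        rw [hs1, norm_mul, Quaternion.norm_coe, norm_star, Real.norm_eq_abs,
          abs_of_pos (inv_pos.mpr hr0), hc]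
      refine ⟨s, mat2_ext ?_ ?_ ?_ ?_⟩
      · rw [sig00, hn0, hn1, h00]
        have hgoal : ((r ^ 2 + (r⁻¹ * c) ^ 2) / 2 : ℝ) = a := by
          field_simp
          nlinarith [sq_nonneg r]
        exact_mod_cast congrArg (fun x : ℝ => (x : Quaternion ℝ)) hgoal
      · rw [sig01, hs0, hs1, StarMul.star_mul, star_star, Quaternion.star_coe]
        rw [Quaternion.coe_commutes, mul_assoc, ← Quaternion.coe_mul,
          inv_mul_cancel₀ hrne, Quaternion.coe_one, mul_one]
      · rw [sig10, hs0, hs1, Quaternion.star_coe, hb10,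
          show ((r⁻¹ : ℝ) : Quaternion ℝ) * star (m 0 1) = star (m 0 1) * ((r⁻¹ : ℝ) : Quaternion ℝ)
            from Quaternion.coe_commutes r⁻¹ _,
          mul_assoc, ← Quaternion.coe_mul, inv_mul_cancel₀ hrne, Quaternion.coe_one, mul_one]
      · rw [sig11, hn0, hn1, h11]
        have hgoal : ((r ^ 2 + (r⁻¹ * c) ^ 2) / 2 : ℝ) = a := by
          field_simp
          nlinarith [sq_nonneg r]
        exact_mod_cast congrArg (fun x : ℝ => (x : Quaternion ℝ)) hgoal
end

section
/- Let s₊, s₋, t₊, t₋ be nonzero vectors in ℝ⁴. There exists a real 4×4 matrix A with det A = 1, A·s₊ = t₊, and Aᵀ·t₋ = s₋ (equivalently (Aᵀ)⁻¹·s₋ = t₋) if and only if s₋ · s₊ = t₋ · t₊, where · denotes the standard dot product. Consequently the orbits of Spin(3,3) ≅ SL(4,ℝ) on pairs of nonzero half-spinors (s₊, s₋) ∈ ℝ⁴ ⊕ ℝ⁴ are exactly the level sets of the pairing λ = s₋ᵀ s₊. -/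
/-!
Both pairs can be moved by `SL(4, ℝ)` to one normal form `(e₀, normalCovector λ)` depending
only on the pairing `λ`, where `normalCovector λ = λ e₀` for `λ ≠ 0` and `normalCovector 0 = e₁`.
To move `(s₊, s₋)` there, complete `s₊` to a basis whose remaining vectors lie in `ker s₋`
(if `λ ≠ 0`), resp. consist of one `w` with `s₋ ⬝ w = 1` followed by vectors of `ker s₋`
(if `λ = 0`). The matrix with these columns is invertible, and rescaling its last column puts it
in `SL₄` without changing the pairings, since that column lies in `ker s₋`; for `λ = 0` this
needs dimension at least 3. Conversely, `t₋ ⬝ A s₊ = Aᵀ t₋ ⬝ s₊` shows that `λ` is invariant.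
-/

open Matrix Module

noncomputable section

variable {K V : Type*} [Field K] [AddCommGroup V] [Module K V]

def Module.Basis.consKer {m : ℕ} {φ : Dual K V} {v : V} (hv : φ v ≠ 0)
    (k : Basis (Fin m) K (LinearMap.ker φ)) : Basis (Fin (m + 1)) K V :=
  Basis.mkFinCons v k
    (fun c x hx hcx => by simpa [hv, LinearMap.mem_ker.mp hx] using congrArg φ hcx)
    (fun z => ⟨-(φ z / φ v), by simp [hv]⟩)

@[simp]
lemma Module.Basis.coe_consKer {m : ℕ} {φ : Dual K V} {v : V} (hv : φ v ≠ 0)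
    (k : Basis (Fin m) K (LinearMap.ker φ)) :
    ⇑(Basis.consKer hv k) = Fin.cons v (Subtype.val ∘ k) :=
  Basis.coe_mkFinCons ..

lemma Module.Dual.exists_basis_zero_eq_of_apply_ne_zero [FiniteDimensional K V] {m : ℕ}
    (hV : finrank K V = m + 1) {φ : Dual K V} {v : V} (hv : φ v ≠ 0) :
    ∃ b : Basis (Fin (m + 1)) K V, b 0 = v ∧ ∀ i : Fin m, φ (b i.succ) = 0 := by
  have hker : finrank K (LinearMap.ker φ) = m := by
    have := Dual.finrank_ker_add_one_of_ne_zero (f := φ) (by rintro rfl; exact hv rfl)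
    omega
  exact ⟨Basis.consKer hv (finBasisOfFinrankEq K _ hker), by simp, fun i => by simp⟩

lemma Module.Dual.exists_basis_zero_eq_of_apply_eq_zero [FiniteDimensional K V] {m : ℕ}
    (hV : finrank K V = m + 2) {φ : Dual K V} {v : V} (hv : v ≠ 0) (hφ : φ ≠ 0)
    (hφv : φ v = 0) :
    ∃ b : Basis (Fin (m + 2)) K V, b 0 = v ∧ φ (b 1) = 1 ∧ ∀ i : Fin m, φ (b i.succ.succ) = 0 := by
  obtain ⟨ψ, hψv⟩ := Projective.exists_dual_eq_one K hv
  obtain ⟨u, hu⟩ := LinearMap.surjective hφ 1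
  -- the hyperplane `ker ψ` is a complement of `v` containing `w`, so the case `φ w ≠ 0`
  -- applied inside `ker ψ` supplies the remaining basis vectors
  set w := u - ψ u • v
  have hw : w ∈ LinearMap.ker ψ := by simp [w, hψv]
  have hφw : φ w = 1 := by simp [w, hu, hφv]
  have hker : finrank K (LinearMap.ker ψ) = m + 1 := by
    have := Dual.finrank_ker_add_one_of_ne_zero (f := ψ) (by rintro rfl; simp at hψv)
    omega
  obtain ⟨b', hb'0, hb'⟩ := exists_basis_zero_eq_of_apply_ne_zero hker
    (φ := φ ∘ₗ (LinearMap.ker ψ).subtype) (v := ⟨w, hw⟩) (by simp [hφw])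
  refine ⟨Basis.consKer (v := v) (by simp [hψv]) b', by simp, ?_, fun i => by simpa using hb' i⟩
  simpa [hb'0] using hφw

open Classical in
def normalCovector {n : ℕ} (l : K) : Fin (n + 3) → K :=
  if l = 0 then Pi.single 1 1 else Pi.single 0 l

lemma normalCovector_last {n : ℕ} (l : K) : normalCovector l (Fin.last (n + 2)) = 0 := by
  unfold normalCovector
  split_ifs <;> simp [Fin.ext_iff]

theorem Module.Dual.exists_basis_zero_eq_and_apply_eq_normalCovector [FiniteDimensional K V]
    {n : ℕ} (hV : finrank K V = n + 3) {φ : Dual K V} {v : V} (hv : v ≠ 0) (hφ : φ ≠ 0) :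
    ∃ b : Basis (Fin (n + 3)) K V, b 0 = v ∧ ∀ i, φ (b i) = normalCovector (φ v) i := by
  by_cases hφv : φ v = 0
  · obtain ⟨b, hb0, hb1, hb⟩ := exists_basis_zero_eq_of_apply_eq_zero hV hv hφ hφv
    refine ⟨b, hb0, fun i => ?_⟩
    rcases Fin.eq_zero_or_eq_succ i with rfl | ⟨j, rfl⟩
    · simp [normalCovector, hb0, hφv]
    rcases Fin.eq_zero_or_eq_succ j with rfl | ⟨k, rfl⟩
    · simpa [normalCovector, hφv] using hb1
    · simp [normalCovector, hφv, hb, Fin.succ_succ_ne_one]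
  · obtain ⟨b, hb0, hb⟩ := exists_basis_zero_eq_of_apply_ne_zero hV hφv
    refine ⟨b, hb0, Fin.cases ?_ fun j => ?_⟩
    · simp [normalCovector, hb0, hφv]
    · simp [normalCovector, hφv, hb]

theorem Matrix.exists_det_eq_one_of_isUnit_det {m : ℕ} {M : Matrix (Fin (m + 2)) (Fin (m + 2)) K}
    (hM : IsUnit M.det) {f : Fin (m + 2) → K} (hf : (Mᵀ *ᵥ f) (Fin.last _) = 0) :
    ∃ B : Matrix (Fin (m + 2)) (Fin (m + 2)) K, B.det = 1 ∧
      B *ᵥ Pi.single 0 1 = M *ᵥ Pi.single 0 1 ∧ Bᵀ *ᵥ f = Mᵀ *ᵥ f := by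
  -- `diag(1, …, 1, d)` fixes `e₀` and every vector with vanishing last coordinate
  set D := diagonal (Function.update 1 (Fin.last _) M.det⁻¹)
  refine ⟨M * D, ?_, ?_, ?_⟩
  · simp [D, det_diagonal, Finset.prod_update_of_mem, hM.ne_zero]
  · rw [← mulVec_mulVec, diagonal_mulVec_single, Function.update_of_ne (Fin.last_pos).ne]
    simp
  · rw [transpose_mul, diagonal_transpose, ← mulVec_mulVec]
    ext i
    rw [mulVec_diagonal]
    rcases eq_or_ne i (Fin.last _) with rfl | hi
    · simp [hf]
    · simp [hi]

theorem Matrix.exists_det_eq_one_mulVec_single_eq_and_transpose_mulVec_eq_normalCovector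
    {n : ℕ} {v f : Fin (n + 3) → K} (hv : v ≠ 0) (hf : f ≠ 0) :
    ∃ B : Matrix (Fin (n + 3)) (Fin (n + 3)) K, B.det = 1 ∧
      B *ᵥ Pi.single 0 1 = v ∧ Bᵀ *ᵥ f = normalCovector (f ⬝ᵥ v) := by
  obtain ⟨b, hb0, hb⟩ := Dual.exists_basis_zero_eq_and_apply_eq_normalCovector
    (finrank_fin_fun K) hv ((dotProductEquiv K _).map_ne_zero_iff.mpr hf)
  set M : Matrix (Fin (n + 3)) (Fin (n + 3)) K := (of b)ᵀ
  have hM : IsUnit M.det := by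
    rw [det_transpose, ← isUnit_iff_isUnit_det]
    exact linearIndependent_rows_iff_isUnit.mp b.linearIndependent
  have hMf : Mᵀ *ᵥ f = normalCovector (f ⬝ᵥ v) := by
    ext i
    simpa [M, mulVec, dotProduct_comm] using hb i
  obtain ⟨B, hB, hB0, hBf⟩ := exists_det_eq_one_of_isUnit_det hM (by rw [hMf, normalCovector_last])
  refine ⟨B, hB, ?_, hBf.trans hMf⟩
  rw [hB0, ← hb0]
  ext i
  simp [M]

end

/-- For nonzero half-spinors `s₊, s₋, t₊, t₋ ∈ ℝ⁴`, there is `A ∈ SL(4,ℝ)` with `A s₊ = t₊`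
and `(Aᵀ)⁻¹ s₋ = t₋` (equivalently `Aᵀ t₋ = s₋`) if and only if `s₋ ⬝ s₊ = t₋ ⬝ t₊`:
the orbits of `Spin(3,3) ≅ SL(4,ℝ)` on pairs of nonzero half-spinors are exactly the level
sets of the pairing `λ = s₋ᵀ s₊`. -/
theorem spin33_orbits_on_half_spinor_pairs (sp sm tp tm : Fin 4 → ℝ)
    (hsp : sp ≠ 0) (hsm : sm ≠ 0) (htp : tp ≠ 0) (htm : tm ≠ 0) :
    (∃ A : Matrix (Fin 4) (Fin 4) ℝ, A.det = 1 ∧ A.mulVec sp = tp ∧ Aᵀ.mulVec tm = sm) ↔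
      sm ⬝ᵥ sp = tm ⬝ᵥ tp := by
  constructor
  · rintro ⟨A, -, rfl, rfl⟩
    rw [mulVec_transpose, dotProduct_mulVec]
  · intro hpair
    obtain ⟨B, hBdet, hB₀, hBf⟩ :=
      exists_det_eq_one_mulVec_single_eq_and_transpose_mulVec_eq_normalCovector (n := 1) hsp hsm
    obtain ⟨C, hCdet, hC₀, hCf⟩ :=
      exists_det_eq_one_mulVec_single_eq_and_transpose_mulVec_eq_normalCovector (n := 1) htp htm
    have hB : IsUnit B.det := hBdet ▸ isUnit_one
    have hBt : IsUnit Bᵀ.det := by rwa [det_transpose]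
    refine ⟨C * B⁻¹, by simp [hBdet, hCdet], ?_, ?_⟩
    · rw [← hB₀, ← hC₀, mulVec_mulVec, Matrix.mul_assoc, nonsing_inv_mul _ hB, Matrix.mul_one]
    · rw [transpose_mul, ← mulVec_mulVec, hCf, ← hpair, ← hBf, transpose_nonsing_inv,
        mulVec_mulVec, nonsing_inv_mul _ hBt, one_mulVec]
end

section
/- Fix p ≥ 1 and let f_{jl} (1 ≤ j, l ≤ p) be smooth real-valued functions of the variables (z, x¹, …, x^p, y₁, …, y_p) with f_{jl} = f_{lj}, satisfying everywhere the quasilinear system ∂²f_{jl}/∂z² = Σ_k ∂²f_{jl}/∂x^k∂y_k − Σ_{m,k} f_{mk} ∂²f_{jl}/∂y_m∂y_k + Σ_{m,k} (∂f_{mj}/∂y_k)(∂f_{kl}/∂y_m). Define A_l = Σ_j ∂f_{jl}/∂y_j. Then each A_l satisfies everywhere the linear second-order system ∂²A_l/∂z² = Σ_k ∂²A_l/∂x^k∂y_k − Σ_{m,k} f_{mk} ∂²A_l/∂y_m∂y_k + Σ_{m,k} (∂f_{kl}/∂y_m)(∂A_m/∂y_k). -/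
/-- Directional (partial) derivative of a real-valued function in the direction `v`. -/
noncomputable def pd {E : Type*} [NormedAddCommGroup E] [NormedSpace ℝ E]
    (g : E → ℝ) (v : E) : E → ℝ :=
  fun w => fderiv ℝ g w v

section helpers
variable {E : Type*} [NormedAddCommGroup E] [NormedSpace ℝ E]

lemma pd_smooth {g : E → ℝ} (hg : ContDiff ℝ (⊤ : ℕ∞) g) (v : E) :
    ContDiff ℝ (⊤ : ℕ∞) (pd g v) :=
  (hg.fderiv_right (by simp)).clm_apply contDiff_const

lemma smooth_diff {g : E → ℝ} (hg : ContDiff ℝ (⊤ : ℕ∞) g) (w : E) :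
    DifferentiableAt ℝ g w :=
  (hg.differentiable (by simp)).differentiableAt

lemma pd_sum {ι : Type*} (s : Finset ι) (g : ι → E → ℝ) {w : E}
    (hg : ∀ i ∈ s, DifferentiableAt ℝ (g i) w) (v : E) :
    pd (fun x => ∑ i ∈ s, g i x) v w = ∑ i ∈ s, pd (g i) v w := by
  simp only [pd, fderiv_fun_sum hg, ContinuousLinearMap.sum_apply]

lemma pd_mul {g h : E → ℝ} {w : E} (hg : DifferentiableAt ℝ g w)
    (hh : DifferentiableAt ℝ h w) (v : E) :
    pd (fun x => g x * h x) v w = pd g v w * h w + g w * pd h v w := by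
  simp only [pd, fderiv_fun_mul hg hh, ContinuousLinearMap.add_apply,
    ContinuousLinearMap.smul_apply, smul_eq_mul]
  ring

lemma pd_sub_add {a b c : E → ℝ} {w : E} (ha : DifferentiableAt ℝ a w)
    (hb : DifferentiableAt ℝ b w) (hc : DifferentiableAt ℝ c w) (v : E) :
    pd (fun x => a x - b x + c x) v w = pd a v w - pd b v w + pd c v w := by
  simp only [pd, fderiv_fun_add (ha.fun_sub hb) hc, fderiv_fun_sub ha hb,
    ContinuousLinearMap.add_apply, ContinuousLinearMap.sub_apply]

lemma pd_comm {g : E → ℝ} (hg : ContDiff ℝ (⊤ : ℕ∞) g) (u v w : E) :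
    pd (pd g u) v w = pd (pd g v) u w := by
  have hsym : IsSymmSndFDerivAt ℝ g w := hg.contDiffAt.isSymmSndFDerivAt (by simp only [minSmoothness_of_isRCLikeNormedField]; exact WithTop.coe_le_coe.mpr le_top)
  have hd : DifferentiableAt ℝ (fderiv ℝ g) w :=
    ((hg.fderiv_right (m := 1) (by exact WithTop.coe_le_coe.mpr le_top)).differentiable (by simp)).differentiableAt
  have key : ∀ a b : E, pd (pd g a) b w = fderiv ℝ (fderiv ℝ g) w b a := by
    intro a b
    have h1 : pd g a = fun y => (fderiv ℝ g y) a := rfl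
    rw [pd, h1, fderiv_clm_apply hd (differentiableAt_const a)]
    simp
  rw [key, key, hsym]

lemma pd_cycle {g : E → ℝ} (hg : ContDiff ℝ (⊤ : ℕ∞) g) (a b c w : E) :
    pd (pd (pd g a) b) c w = pd (pd (pd g b) c) a w := by
  have h : pd (pd g a) b = pd (pd g b) a := funext (pd_comm hg a b)
  rw [h]
  exact pd_comm (pd_smooth hg b) a c w

lemma sum3_swap {p : ℕ} (X : Fin p → Fin p → Fin p → ℝ) :
    ∑ j, ∑ m, ∑ k, X j m k = ∑ j, ∑ m, ∑ k, X k m j :=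
  calc ∑ j, ∑ m, ∑ k, X j m k
      = ∑ m, ∑ j, ∑ k, X j m k := Finset.sum_comm
    _ = ∑ m, ∑ k, ∑ j, X j m k := Finset.sum_congr rfl fun _ _ => Finset.sum_comm
    _ = ∑ k, ∑ m, ∑ j, X j m k := Finset.sum_comm

end helpers

/-- The compatibility computation for (p+1,p)-metrics with a parallel pure spinor field:
if the symmetric functions `f_{jl}(z, x, y)` satisfy the quasilinear Ricci-flat evolution
system
`∂²f_{jl}/∂z² = Σ_k ∂²f_{jl}/∂x^k∂y_k − Σ_{m,k} f_{mk} ∂²f_{jl}/∂y_m∂y_k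
  + Σ_{m,k} (∂f_{mj}/∂y_k)(∂f_{kl}/∂y_m)`,
then the constraint quantities `A_l = Σ_j ∂f_{jl}/∂y_j` satisfy the linear second-order system
`∂²A_l/∂z² = Σ_k ∂²A_l/∂x^k∂y_k − Σ_{m,k} f_{mk} ∂²A_l/∂y_m∂y_k
  + Σ_{m,k} (∂f_{kl}/∂y_m)(∂A_m/∂y_k)`. -/
theorem constraint_propagation (p : ℕ) (hp : 1 ≤ p)
    (f : Fin p → Fin p → (ℝ × (Fin p → ℝ) × (Fin p → ℝ)) → ℝ)
    (hsymm : ∀ j l, f j l = f l j)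
    (hsmooth : ∀ j l, ContDiff ℝ (⊤ : ℕ∞) (f j l))
    (ez : ℝ × (Fin p → ℝ) × (Fin p → ℝ)) (hez : ez = (1, 0, 0))
    (ex : Fin p → ℝ × (Fin p → ℝ) × (Fin p → ℝ))
    (hex : ∀ k, ex k = (0, Pi.single k 1, 0))
    (ey : Fin p → ℝ × (Fin p → ℝ) × (Fin p → ℝ))
    (hey : ∀ k, ey k = (0, 0, Pi.single k 1))
    (hPDE : ∀ j l w, pd (pd (f j l) ez) ez w =
      (∑ k, pd (pd (f j l) (ex k)) (ey k) w)
      - (∑ m, ∑ k, f m k w * pd (pd (f j l) (ey m)) (ey k) w)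
      + (∑ m, ∑ k, pd (f m j) (ey k) w * pd (f k l) (ey m) w))
    (A : Fin p → (ℝ × (Fin p → ℝ) × (Fin p → ℝ)) → ℝ)
    (hA : ∀ l w, A l w = ∑ j, pd (f j l) (ey j) w) :
    ∀ l w, pd (pd (A l) ez) ez w =
      (∑ k, pd (pd (A l) (ex k)) (ey k) w)
      - (∑ m, ∑ k, f m k w * pd (pd (A l) (ey m)) (ey k) w)
      + (∑ m, ∑ k, pd (f k l) (ey m) w * pd (A m) (ey k) w) := by
  intro l w
  have hs1 : ∀ j k v, ContDiff ℝ (⊤ : ℕ∞) (pd (f j k) v) := fun j k v => pd_smooth (hsmooth j k) v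
  have hs2 : ∀ j k u v, ContDiff ℝ (⊤ : ℕ∞) (pd (pd (f j k) u) v) :=
    fun j k u v => pd_smooth (hs1 j k u) v
  have hA1 : ∀ l' v, pd (A l') v = fun x => ∑ j, pd (pd (f j l') (ey j)) v x := by
    intro l' v; funext x
    rw [show A l' = fun x => ∑ j, pd (f j l') (ey j) x from funext (hA l')]
    exact pd_sum Finset.univ _ (fun j _ => smooth_diff (hs1 j l' (ey j)) x) v
  have hA2 : ∀ l' u v x, pd (pd (A l') u) v x = ∑ j, pd (pd (pd (f j l') (ey j)) u) v x := by
    intro l' u v x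
    rw [hA1 l' u]
    exact pd_sum Finset.univ _ (fun j _ => smooth_diff (hs2 j l' (ey j) u) x) v
  -- expand the left-hand side
  have hL : pd (pd (A l) ez) ez w = ∑ j,
      ((∑ k, pd (pd (pd (f j l) (ex k)) (ey k)) (ey j) w)
        - (∑ m, ∑ k, (pd (f m k) (ey j) w * pd (pd (f j l) (ey m)) (ey k) w
            + f m k w * pd (pd (pd (f j l) (ey m)) (ey k)) (ey j) w))
        + (∑ m, ∑ k, (pd (pd (f m j) (ey k)) (ey j) w * pd (f k l) (ey m) w
            + pd (f m j) (ey k) w * pd (pd (f k l) (ey m)) (ey j) w))) := by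
    rw [hA2 l ez ez w]
    refine Finset.sum_congr rfl fun j _ => ?_
    rw [pd_cycle (hsmooth j l) (ey j) ez ez w,
      show pd (pd (f j l) ez) ez = fun x =>
        (∑ k, pd (pd (f j l) (ex k)) (ey k) x)
        - (∑ m, ∑ k, f m k x * pd (pd (f j l) (ey m)) (ey k) x)
        + (∑ m, ∑ k, pd (f m j) (ey k) x * pd (f k l) (ey m) x) from funext (hPDE j l)]
    have hT1 : DifferentiableAt ℝ (fun x => ∑ k, pd (pd (f j l) (ex k)) (ey k) x) w :=
      DifferentiableAt.fun_sum fun k _ => smooth_diff (hs2 j l (ex k) (ey k)) w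
    have hT2 : DifferentiableAt ℝ
        (fun x => ∑ m, ∑ k, f m k x * pd (pd (f j l) (ey m)) (ey k) x) w :=
      DifferentiableAt.fun_sum fun m _ => DifferentiableAt.fun_sum fun k _ =>
        (smooth_diff (hsmooth m k) w).mul (smooth_diff (hs2 j l (ey m) (ey k)) w)
    have hT3 : DifferentiableAt ℝ
        (fun x => ∑ m, ∑ k, pd (f m j) (ey k) x * pd (f k l) (ey m) x) w :=
      DifferentiableAt.fun_sum fun m _ => DifferentiableAt.fun_sum fun k _ =>
        (smooth_diff (hs1 m j (ey k)) w).mul (smooth_diff (hs1 k l (ey m)) w)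
    rw [pd_sub_add hT1 hT2 hT3 (ey j)]
    congr 1
    · congr 1
      · exact pd_sum Finset.univ _ (fun k _ => smooth_diff (hs2 j l (ex k) (ey k)) w) (ey j)
      · rw [pd_sum Finset.univ _ (fun m _ => DifferentiableAt.fun_sum fun k _ =>
          (smooth_diff (hsmooth m k) w).fun_mul (smooth_diff (hs2 j l (ey m) (ey k)) w)) (ey j)]
        refine Finset.sum_congr rfl fun m _ => ?_
        rw [pd_sum Finset.univ _ (fun k _ =>
          (smooth_diff (hsmooth m k) w).fun_mul (smooth_diff (hs2 j l (ey m) (ey k)) w)) (ey j)]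
        exact Finset.sum_congr rfl fun k _ =>
          pd_mul (smooth_diff (hsmooth m k) w) (smooth_diff (hs2 j l (ey m) (ey k)) w) (ey j)
    · rw [pd_sum Finset.univ _ (fun m _ => DifferentiableAt.fun_sum fun k _ =>
        (smooth_diff (hs1 m j (ey k)) w).fun_mul (smooth_diff (hs1 k l (ey m)) w)) (ey j)]
      refine Finset.sum_congr rfl fun m _ => ?_
      rw [pd_sum Finset.univ _ (fun k _ =>
        (smooth_diff (hs1 m j (ey k)) w).fun_mul (smooth_diff (hs1 k l (ey m)) w)) (ey j)]
      exact Finset.sum_congr rfl fun k _ =>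
        pd_mul (smooth_diff (hs1 m j (ey k)) w) (smooth_diff (hs1 k l (ey m)) w) (ey j)
  -- expand the right-hand side pieces
  have hR1 : (∑ k, pd (pd (A l) (ex k)) (ey k) w)
      = ∑ k, ∑ j, pd (pd (pd (f j l) (ex k)) (ey k)) (ey j) w := by
    refine Finset.sum_congr rfl fun k _ => ?_
    rw [hA2 l (ex k) (ey k) w]
    exact Finset.sum_congr rfl fun j _ => pd_cycle (hsmooth j l) (ey j) (ex k) (ey k) w
  have hR2 : (∑ m, ∑ k, f m k w * pd (pd (A l) (ey m)) (ey k) w)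
      = ∑ m, ∑ k, ∑ j, f m k w * pd (pd (pd (f j l) (ey m)) (ey k)) (ey j) w := by
    refine Finset.sum_congr rfl fun m _ => Finset.sum_congr rfl fun k _ => ?_
    rw [hA2 l (ey m) (ey k) w, Finset.mul_sum]
    exact Finset.sum_congr rfl fun j _ => by
      rw [pd_cycle (hsmooth j l) (ey j) (ey m) (ey k) w]
  have hR3 : (∑ m, ∑ k, pd (f k l) (ey m) w * pd (A m) (ey k) w)
      = ∑ m, ∑ k, ∑ j, pd (f k l) (ey m) w * pd (pd (f j m) (ey j)) (ey k) w := by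
    refine Finset.sum_congr rfl fun m _ => Finset.sum_congr rfl fun k _ => ?_
    rw [hA1 m (ey k), Finset.mul_sum]
  rw [hL, hR1, hR2, hR3]
  -- split the sums
  have split1 : ∀ (P Q R : Fin p → ℝ), ∑ j, (P j - Q j + R j)
      = (∑ j, P j) - (∑ j, Q j) + (∑ j, R j) := by
    intro P Q R
    rw [Finset.sum_add_distrib, Finset.sum_sub_distrib]
  rw [split1]
  simp only [Finset.sum_add_distrib]
  -- four key identities
  have key1 : ∑ j, ∑ k, pd (pd (pd (f j l) (ex k)) (ey k)) (ey j) w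
      = ∑ k, ∑ j, pd (pd (pd (f j l) (ex k)) (ey k)) (ey j) w := Finset.sum_comm
  have key2 : ∑ j, ∑ m, ∑ k, f m k w * pd (pd (pd (f j l) (ey m)) (ey k)) (ey j) w
      = ∑ m, ∑ k, ∑ j, f m k w * pd (pd (pd (f j l) (ey m)) (ey k)) (ey j) w := by
    rw [Finset.sum_comm]
    exact Finset.sum_congr rfl fun m _ => Finset.sum_comm
  have key3 : ∑ j, ∑ m, ∑ k, pd (pd (f m j) (ey k)) (ey j) w * pd (f k l) (ey m) w
      = ∑ m, ∑ k, ∑ j, pd (f k l) (ey m) w * pd (pd (f j m) (ey j)) (ey k) w := by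
    have h : ∀ (j m k : Fin p), pd (pd (f m j) (ey k)) (ey j) w * pd (f k l) (ey m) w
        = pd (f k l) (ey m) w * pd (pd (f j m) (ey j)) (ey k) w := by
      intro j m k
      rw [hsymm m j, pd_comm (hsmooth j m) (ey k) (ey j) w, mul_comm]
    simp only [h]
    rw [Finset.sum_comm]
    exact Finset.sum_congr rfl fun m _ => Finset.sum_comm
  have key4 : ∑ j, ∑ m, ∑ k, pd (f m k) (ey j) w * pd (pd (f j l) (ey m)) (ey k) w
      = ∑ j, ∑ m, ∑ k, pd (f m j) (ey k) w * pd (pd (f k l) (ey m)) (ey j) w := by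
    exact sum3_swap fun j m k => pd (f m k) (ey j) w * pd (pd (f j l) (ey m)) (ey k) w
  rw [key1, key2, key3, key4]
  ring
end
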